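/- arXiv:2409.00870 — 2 statements merged into one kernel-verified Lean document; each statement's English description precedes it below -/
import Mathlib

section
/- Suppose K and T are inverse semigroups, T acts on K by endomorphisms, and ε: K → E(T) is a surjective homomorphism satisfying: for all a ∈ K and e ∈ E(T), e·a = a if and only if ε(a) ≤ e. Then ε(ε(a)·b) = ε(ab) = ε(ε(b)·a) for every a, b ∈ K, and consequently ε(e·a) = e ε(a) for every a ∈ K and e ∈ E(T). -/
/-- An inverse semigroup: a semigroup in which every element `a` has a unique
inverse `a⁻¹` satisfying `a * a⁻¹ * a = a` and `a⁻¹ * a * a⁻¹ = a⁻¹`. -/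
class InverseSemigroup (S : Type*) extends Semigroup S, Inv S where
  mul_inv_mul : ∀ a : S, a * a⁻¹ * a = a
  inv_mul_inv : ∀ a : S, a⁻¹ * a * a⁻¹ = a⁻¹
  inv_unique : ∀ {a b : S}, a * b * a = a → b * a * b = b → b = a⁻¹

/-- The set of idempotents `E(T)` of a `Mul`-structure. -/
def idemSet (T : Type*) [Mul T] : Set T := {e | e * e = e}

/-- `ran t = t * t⁻¹`. -/
def iran {T : Type*} [Mul T] [Inv T] (t : T) : T := t * t⁻¹

/-- `dom t = t⁻¹ * t`. -/
def idom {T : Type*} [Mul T] [Inv T] (t : T) : T := t⁻¹ * t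

/-- The natural partial order: `a ≤ b` iff `a = e * b` for some idempotent `e`. -/
def nle {T : Type*} [Mul T] (a b : T) : Prop := ∃ e ∈ idemSet T, a = e * b

/-- `b` is an inverse of `a`. -/
def IsInvPair {T : Type*} [Mul T] (a b : T) : Prop := a * b * a = a ∧ b * a * b = b

/-- An action of `T` on `K` by endomorphisms. -/
def IsAction {K T : Type*} [Mul K] [Mul T] (act : T → K → K) : Prop :=
  (∀ t a b, act t (a * b) = act t a * act t b) ∧
  (∀ t u a, act (t * u) a = act t (act u a))

/-- `ε : K → T` is a (surjective) homomorphism from `K` onto the semilattice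
of idempotents `E(T)` of `T`. -/
def IsSurjHomOntoE {K T : Type*} [Mul K] [Mul T] (ε : K → T) : Prop :=
  (∀ a b, ε (a * b) = ε a * ε b) ∧ (∀ a, ε a ∈ idemSet T) ∧
  (∀ e ∈ idemSet T, ∃ a, ε a = e)

/-- Condition (AFR): `e · a = a` iff `ε a ≤ e`, for all `a ∈ K`, `e ∈ E(T)`. -/
def AFR {K T : Type*} [Mul K] [Mul T] (act : T → K → K) (ε : K → T) : Prop :=
  ∀ (a : K), ∀ e ∈ idemSet T, (act e a = a ↔ nle (ε a) e)

section Aux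
variable {T : Type*} [InverseSemigroup T]

lemma aux_inv_inv (a : T) : a⁻¹⁻¹ = a :=
  (InverseSemigroup.inv_unique (InverseSemigroup.inv_mul_inv a)
    (InverseSemigroup.mul_inv_mul a)).symm

lemma aux_idem_mul_idem {e f : T} (he : e * e = e) (hf : f * f = f) :
    (e * f) * (e * f) = e * f ∧ (e * f)⁻¹ = e * f := by
  set x := (e * f)⁻¹ with hx
  have e2 : ∀ y : T, e * (e * y) = e * y := fun y => by rw [← mul_assoc, he]
  have f2 : ∀ y : T, f * (f * y) = f * y := fun y => by rw [← mul_assoc, hf]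
  have hmi : e * f * x * (e * f) = e * f := InverseSemigroup.mul_inv_mul (e * f)
  have him : x * (e * f) * x = x := InverseSemigroup.inv_mul_inv (e * f)
  have hmi' : e * (f * (x * (e * f))) = e * f := by simpa only [mul_assoc] using hmi
  have him' : ∀ y : T, x * (e * (f * (x * y))) = x * y := fun y => by
    have : x * (e * f) * x * y = x * y := by rw [him]
    simpa only [mul_assoc] using this
  have h1 : e * f * (f * x * e) * (e * f) = e * f := by
    simp only [mul_assoc]
    rw [f2 (x * (e * (e * f))), e2 f, hmi']
  have h2 : (f * x * e) * (e * f) * (f * x * e) = f * x * e := by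
    simp only [mul_assoc]
    rw [e2 (f * (f * (x * e))), f2 (x * e), him' e]
  have hx2 : f * x * e = x := InverseSemigroup.inv_unique h1 h2
  have hxx : x * x = x := by
    conv_lhs => rw [← hx2]
    simp only [mul_assoc]
    rw [him' e, ← mul_assoc, hx2]
  have hefx : e * f = x := by
    have h3 : x * x * x = x := by rw [hxx, hxx]
    have := InverseSemigroup.inv_unique h3 h3  -- x = x⁻¹
    rw [hx] at this
    rw [← aux_inv_inv (e * f), ← this, ← hx]
  constructor
  · rw [hefx]; exact hxx
  · exact hefx.symm

lemma aux_idem_comm {e f : T} (he : e * e = e) (hf : f * f = f) : e * f = f * e := by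
  obtain ⟨hef, hefinv⟩ := aux_idem_mul_idem he hf
  obtain ⟨hfe, _⟩ := aux_idem_mul_idem hf he
  have e2 : ∀ y : T, e * (e * y) = e * y := fun y => by rw [← mul_assoc, he]
  have f2 : ∀ y : T, f * (f * y) = f * y := fun y => by rw [← mul_assoc, hf]
  have h1 : (e * f) * (f * e) * (e * f) = e * f := by
    simp only [mul_assoc]
    rw [f2 (e * (e * f)), e2 f]
    simpa only [mul_assoc] using hef
  have h2 : (f * e) * (e * f) * (f * e) = f * e := by
    simp only [mul_assoc]
    rw [e2 (f * (f * e)), f2 e]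
    simpa only [mul_assoc] using hfe
  have := InverseSemigroup.inv_unique h1 h2
  rw [hefinv] at this
  exact this.symm

end Aux

/-- Under condition (AFR), `ε(ε(a)·b) = ε(ab) = ε(ε(b)·a)` for all
`a, b ∈ K`, and consequently `ε(e·a) = e * ε(a)` for all `a ∈ K`, `e ∈ E(T)`. -/
theorem eps_act_eq_eps_mul {K T : Type*} [InverseSemigroup K]
    [InverseSemigroup T] (act : T → K → K) (hact : IsAction act)
    (ε : K → T) (hε : IsSurjHomOntoE ε) (hafr : AFR act ε) :
    (∀ a b : K, ε (act (ε a) b) = ε (a * b) ∧ ε (a * b) = ε (act (ε b) a)) ∧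
    (∀ (a : K), ∀ e ∈ idemSet T, ε (act e a) = e * ε a) := by
  obtain ⟨εmul, εidem, εsurj⟩ := hε
  obtain ⟨amul, acomp⟩ := hact
  have idm : ∀ a : K, ε a * ε a = ε a := fun a => εidem a
  have fix : ∀ (a : K) (e : T), e * e = e → ε a * e = ε a → act e a = a := by
    intro a e he h
    exact (hafr a e he).mpr ⟨ε a, idm a, h.symm⟩
  have le_of_fix : ∀ (a : K) (e : T), e * e = e → act e a = a → ε a * e = ε a := by
    intro a e he h
    obtain ⟨g, hg, hge⟩ := (hafr a e he).mp h
    rw [hge, mul_assoc, he]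
  have self_fix : ∀ a : K, act (ε a) a = a := fun a => fix a (ε a) (idm a) (idm a)
  have main : ∀ a b : K, ε (act (ε a) b) = ε (a * b) ∧ ε (act (ε b) a) = ε (a * b) := by
    intro a b
    set f := ε (a * b) with hfdef
    have hf : f * f = f := idm (a * b)
    have hfab : f = ε a * ε b := εmul a b
    have hcomm : ε a * ε b = ε b * ε a := aux_idem_comm (idm a) (idm b)
    have hfb : act f b = act (ε a) b := by rw [hfab, acomp, self_fix]
    have hfa : act f a = act (ε b) a := by rw [hfab, hcomm, acomp, self_fix]
    have h1 : act f (a * b) = a * b := fix (a * b) f hf hf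
    have h2 : a * b = act f a * act f b := by rw [← amul, h1]
    have h3 : f = ε (act f a) * ε (act f b) := by
      rw [hfdef]
      conv_lhs => rw [h2]
      exact εmul _ _
    have ha' : ε (act f a) * f = ε (act f a) :=
      le_of_fix (act f a) f hf (by rw [← acomp, hf])
    have hb' : ε (act f b) * f = ε (act f b) :=
      le_of_fix (act f b) f hf (by rw [← acomp, hf])
    have eia := idm (act f a)
    have eib := idm (act f b)
    set u := ε (act f a) with hu
    set v := ε (act f b) with hv
    have hcommA : u * v = v * u := aux_idem_comm eia eib
    have h4a : f * u = f := by rw [h3, mul_assoc, ← hcommA, ← mul_assoc, eia]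
    have h4b : f * v = f := by rw [h3, mul_assoc, eib]
    have hA : u = f := by rw [← ha', aux_idem_comm eia hf, h4a]
    have hB : v = f := by rw [← hb', aux_idem_comm eib hf, h4b]
    constructor
    · rw [← hfb, ← hv]; exact hB
    · rw [← hfa, ← hu]; exact hA
  constructor
  · intro a b
    exact ⟨(main a b).1, ((main a b).2).symm⟩
  · intro a e he
    obtain ⟨x, rfl⟩ := εsurj e he
    rw [(main x a).1, εmul]
end

section
/- Let K and T be inverse semigroups, let T act on K by endomorphisms satisfying (AFR), let 𝕊 = K⋊T be the resulting full restricted semidirect product, and let Θ be the congruence on 𝕊 induced by the second projection. For each t ∈ T, define the bioperator ω_[t] on 𝕊 by ω_[t](x,u) = (t·x, tu) and (x,u)ω_[t] = (ran(ut)·x, ut). Then ω_[t] is a bitranslation of 𝕊 (i.e., a linked pair of a left and a right translation), ω_[t] respects Θ, and the induced bitranslation ω_[t]^↓ on 𝕊/Θ corresponds, under the canonical isomorphism 𝕊/Θ ≅ T, to the inner bitranslation of T induced by t; in particular ω_[t] ∈ Ω(𝕊,Θ). -/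
/-- The carrier of the λ-semidirect product `K ⋊^λ T`:
`{(a,t) ∈ K × T : a = ran(t) · a}`. -/
def lsdSet {K T : Type*} [Mul K] [Mul T] [Inv T] (act : T → K → K) :
    Set (K × T) := {p | act (iran p.2) p.1 = p.1}

/-- The multiplication of the λ-semidirect product:
`(a,t)(b,u) = ((ran(tu) · a)(t · b), tu)`. -/
def lsdMul {K T : Type*} [Mul K] [Mul T] [Inv T] (act : T → K → K)
    (p q : K × T) : K × T :=
  (act (iran (p.2 * q.2)) p.1 * act p.2 q.1, p.2 * q.2)

/-- The carrier of the full restricted semidirect product `K ⋊ T`: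
`{(a,t) ∈ K × T : ε a = ran t}`. -/
def rsdSet {K T : Type*} [Mul T] [Inv T] (ε : K → T) : Set (K × T) :=
  {p | ε p.1 = iran p.2}

/-- The multiplication of the full restricted semidirect product:
`(a,t)(b,u) = (a (t · b), tu)`. -/
def rsdMul {K T : Type*} [Mul K] [Mul T] (act : T → K → K)
    (p q : K × T) : K × T :=
  (p.1 * act p.2 q.1, p.2 * q.2)

/-- The Kernel of the congruence `ker π₂` (equality of second components) on a
subset `C` of a product, with multiplication `m`: all elements of `C` that are
`(ker π₂)`-related to an idempotent of `C`. -/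
def pi2Kernel {X Y : Type*} (m : X × Y → X × Y → X × Y) (C : Set (X × Y)) :
    Set (X × Y) :=
  {p | p ∈ C ∧ ∃ q ∈ C, m q q = q ∧ q.2 = p.2}

/-- `(l, r)` is a bitranslation of the subsemigroup on the carrier `C` (with
multiplication `m`): `l` is a left translation, `r` is a right translation
(both mapping `C` into `C`), and they are linked. -/
def IsBitransOn {X : Type*} (m : X → X → X) (C : Set X) (l r : X → X) : Prop :=
  (∀ s ∈ C, l s ∈ C ∧ r s ∈ C) ∧
  (∀ s ∈ C, ∀ t ∈ C,
      l (m s t) = m (l s) t ∧ r (m s t) = m s (r t) ∧ m s (l t) = m (r s) t)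

/-- The pair `(l, r)` respects the congruence `Θ = ker π₂` (equality of second
components) on `C`. -/
def RespectsPi2 {K T : Type*} (C : Set (K × T)) (l r : K × T → K × T) : Prop :=
  ∀ p ∈ C, ∀ q ∈ C, p.2 = q.2 → (l p).2 = (l q).2 ∧ (r p).2 = (r q).2

/-- The bitranslation induced by `(l, r)` on the quotient `𝕊/Θ ≅ T` is the
inner bitranslation of `T` induced by `t`. -/
def InducesInnerPi2 {K T : Type*} [Mul T] (C : Set (K × T))
    (l r : K × T → K × T) (t : T) : Prop :=
  ∀ p ∈ C, (l p).2 = t * p.2 ∧ (r p).2 = p.2 * t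

/-- Membership in `Ω(𝕊, Θ)`: a bitranslation of `𝕊` respecting `Θ` whose
induced bitranslation on `𝕊/Θ ≅ T` is inner. -/
def MemOmegaPi2 {K T : Type*} [Mul T] (m : K × T → K × T → K × T)
    (C : Set (K × T)) (l r : K × T → K × T) : Prop :=
  IsBitransOn m C l r ∧ RespectsPi2 C l r ∧ ∃ t : T, InducesInnerPi2 C l r t

/-- The left translation part of the bioperator `ω_[t]` on `𝕊 = K ⋊ T`:
`ω_[t](x,u) = (t·x, tu)`. -/
def Ltr {K T : Type*} [Mul T] (act : T → K → K) (t : T) :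
    K × T → K × T :=
  fun p => (act t p.1, t * p.2)

/-- The right translation part of the bioperator `ω_[t]` on `𝕊 = K ⋊ T`:
`(x,u)ω_[t] = (ran(ut)·x, ut)`. -/
def Rtr {K T : Type*} [Mul T] [Inv T] (act : T → K → K) (t : T) :
    K × T → K × T :=
  fun p => (act (iran (p.2 * t)) p.1, p.2 * t)

section AuxInv

variable {S : Type*} [InverseSemigroup S]

lemma ism_mim (a : S) : a * a⁻¹ * a = a := InverseSemigroup.mul_inv_mul a
lemma ism_imi (a : S) : a⁻¹ * a * a⁻¹ = a⁻¹ := InverseSemigroup.inv_mul_inv a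

lemma idem_inv_self {e : S} (he : e * e = e) : e⁻¹ = e :=
  (InverseSemigroup.inv_unique (by rw [he, he]) (by rw [he, he])).symm

lemma ism_inv_inv (a : S) : a⁻¹⁻¹ = a :=
  (InverseSemigroup.inv_unique (ism_imi a) (ism_mim a)).symm

lemma ran_idem (a : S) : (a * a⁻¹) * (a * a⁻¹) = a * a⁻¹ := by
  calc (a * a⁻¹) * (a * a⁻¹) = (a * a⁻¹ * a) * a⁻¹ := by simp only [mul_assoc]
    _ = a * a⁻¹ := by rw [ism_mim]

lemma dom_idem (a : S) : (a⁻¹ * a) * (a⁻¹ * a) = a⁻¹ * a := by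
  calc (a⁻¹ * a) * (a⁻¹ * a) = (a⁻¹ * a * a⁻¹) * a := by simp only [mul_assoc]
    _ = a⁻¹ * a := by rw [ism_imi]

lemma idem_mul {e f : S} (he : e * e = e) (hf : f * f = f) :
    (e * f) * (e * f) = e * f := by
  set x := (e * f)⁻¹ with hx
  have h1 : (e * f) * x * (e * f) = e * f := ism_mim _
  have h2 : x * (e * f) * x = x := ism_imi _
  have hA : (e * f) * (f * x * e) * (e * f) = e * f := by
    calc (e * f) * (f * x * e) * (e * f)
        = (e * (f * f)) * (x * ((e * e) * f)) := by simp only [mul_assoc]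
      _ = (e * f) * (x * (e * f)) := by rw [hf, he]
      _ = (e * f) * x * (e * f) := by simp only [mul_assoc]
      _ = e * f := h1
  have hB : (f * x * e) * (e * f) * (f * x * e) = f * x * e := by
    calc (f * x * e) * (e * f) * (f * x * e)
        = f * (x * ((e * e) * ((f * f) * (x * e)))) := by simp only [mul_assoc]
      _ = f * (x * (e * (f * (x * e)))) := by rw [he, hf]
      _ = f * (x * (e * f) * x) * e := by simp only [mul_assoc]
      _ = f * x * e := by rw [h2]
  have hxe : f * x * e = x := InverseSemigroup.inv_unique hA hB
  have hxx : x * x = x := by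
    conv_lhs => rw [← hxe]
    calc (f * x * e) * (f * x * e)
        = f * (x * (e * f) * x) * e := by simp only [mul_assoc]
      _ = f * x * e := by rw [h2]
      _ = x := hxe
  have hefx : e * f = x := by
    have : e * f = x⁻¹ := InverseSemigroup.inv_unique h2 h1
    rw [this, idem_inv_self hxx]
  rw [hefx]; exact hxx

lemma idem_comm {e f : S} (he : e * e = e) (hf : f * f = f) :
    e * f = f * e := by
  have hef := idem_mul he hf
  have hfe := idem_mul hf he
  have hA : (e * f) * (f * e) * (e * f) = e * f := by
    calc (e * f) * (f * e) * (e * f)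
        = (e * (f * f)) * ((e * e) * f) := by simp only [mul_assoc]
      _ = (e * f) * (e * f) := by rw [hf, he]
      _ = e * f := hef
  have hB : (f * e) * (e * f) * (f * e) = f * e := by
    calc (f * e) * (e * f) * (f * e)
        = (f * (e * e)) * ((f * f) * e) := by simp only [mul_assoc]
      _ = (f * e) * (f * e) := by rw [he, hf]
      _ = f * e := hfe
  have : f * e = (e * f)⁻¹ := InverseSemigroup.inv_unique hA hB
  rw [this, idem_inv_self hef]

lemma ism_mul_inv_rev (a b : S) : (a * b)⁻¹ = b⁻¹ * a⁻¹ := by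
  have hA : (a * b) * (b⁻¹ * a⁻¹) * (a * b) = a * b := by
    calc (a * b) * (b⁻¹ * a⁻¹) * (a * b)
        = a * ((b * b⁻¹) * (a⁻¹ * a)) * b := by simp only [mul_assoc]
      _ = a * ((a⁻¹ * a) * (b * b⁻¹)) * b := by
          rw [idem_comm (ran_idem b) (dom_idem a)]
      _ = (a * a⁻¹ * a) * (b * b⁻¹ * b) := by simp only [mul_assoc]
      _ = a * b := by rw [ism_mim, ism_mim]
  have hB : (b⁻¹ * a⁻¹) * (a * b) * (b⁻¹ * a⁻¹) = b⁻¹ * a⁻¹ := by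
    calc (b⁻¹ * a⁻¹) * (a * b) * (b⁻¹ * a⁻¹)
        = b⁻¹ * ((a⁻¹ * a) * (b * b⁻¹)) * a⁻¹ := by simp only [mul_assoc]
      _ = b⁻¹ * ((b * b⁻¹) * (a⁻¹ * a)) * a⁻¹ := by
          rw [idem_comm (dom_idem a) (ran_idem b)]
      _ = (b⁻¹ * b * b⁻¹) * (a⁻¹ * a * a⁻¹) := by simp only [mul_assoc]
      _ = b⁻¹ * a⁻¹ := by rw [ism_imi, ism_imi]
  exact (InverseSemigroup.inv_unique hA hB).symm

lemma conj_idem (s : S) {e : S} (he : e * e = e) :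
    (s * e * s⁻¹) * (s * e * s⁻¹) = s * e * s⁻¹ := by
  calc (s * e * s⁻¹) * (s * e * s⁻¹)
      = s * (e * ((s⁻¹ * s) * (e * s⁻¹))) := by simp only [mul_assoc]
    _ = s * ((e * (s⁻¹ * s)) * e) * s⁻¹ := by simp only [mul_assoc]
    _ = s * (((s⁻¹ * s) * e) * e) * s⁻¹ := by rw [idem_comm he (dom_idem s)]
    _ = (s * (s⁻¹ * s)) * (e * e) * s⁻¹ := by simp only [mul_assoc]
    _ = (s * s⁻¹ * s) * e * s⁻¹ := by rw [he]; simp only [mul_assoc]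
    _ = s * e * s⁻¹ := by rw [ism_mim]

end AuxInv
section AuxAct

variable {K T : Type*} [InverseSemigroup K] [InverseSemigroup T]
variable {act : T → K → K} {ε : K → T}

lemma afr_iff (hε : IsSurjHomOntoE ε) (hafr : AFR act ε)
    {e : T} (he : e * e = e) (a : K) :
    act e a = a ↔ ε a * e = ε a := by
  have h := hafr a e he
  constructor
  · intro hx
    obtain ⟨g, hg, hgeq⟩ := h.mp hx
    rw [hgeq, mul_assoc, he]
  · intro hx
    exact h.mpr ⟨ε a, hε.2.1 a, hx.symm⟩

lemma eps_idem (hε : IsSurjHomOntoE ε) (a : K) : ε a * ε a = ε a := hε.2.1 a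

lemma eps_act_idem (hact : IsAction act) (hε : IsSurjHomOntoE ε)
    (hafr : AFR act ε) {e : T} (he : e * e = e) (a : K) :
    ε (act e a) = e * ε a := by
  obtain ⟨c, hc⟩ := hε.2.2 e he
  have h1 : act e c = c := (afr_iff hε hafr he c).mpr (by rw [hc, he])
  have h2 : act e (c * a) = c * a := by
    refine (afr_iff hε hafr he (c * a)).mpr ?_
    rw [hε.1, hc]
    calc e * ε a * e = e * (ε a * e) := by rw [mul_assoc]
      _ = e * (e * ε a) := by rw [idem_comm (eps_idem hε a) he]
      _ = (e * e) * ε a := by rw [mul_assoc]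
      _ = e * ε a := by rw [he]
  have h3 : c * a = c * act e a := by
    conv_lhs => rw [← h2, hact.1, h1]
  have h4 : e * ε a = e * ε (act e a) := by
    have := congrArg ε h3
    rwa [hε.1, hε.1, hc] at this
  have h5 : ε (act e a) * e = ε (act e a) := by
    refine (afr_iff hε hafr he (act e a)).mp ?_
    rw [← hact.2, he]
  calc ε (act e a) = ε (act e a) * e := h5.symm
    _ = e * ε (act e a) := idem_comm (eps_idem hε (act e a)) he
    _ = e * ε a := h4.symm

lemma eps_act (hact : IsAction act) (hε : IsSurjHomOntoE ε)
    (hafr : AFR act ε) (t : T) (a : K) :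
    ε (act t a) = t * ε a * t⁻¹ := by
  set f := ε (act t a) with hf
  have hfE : f * f = f := eps_idem hε _
  have hranE : (t * t⁻¹) * (t * t⁻¹) = t * t⁻¹ := ran_idem t
  have hdomE : (t⁻¹ * t) * (t⁻¹ * t) = t⁻¹ * t := dom_idem t
  have haE : ε a * ε a = ε a := eps_idem hε a
  have hgE : (t * ε a * t⁻¹) * (t * ε a * t⁻¹) = t * ε a * t⁻¹ := conj_idem t haE
  -- f ≤ t t⁻¹
  have hA : f * (t * t⁻¹) = f := by
    refine (afr_iff hε hafr hranE (act t a)).mp ?_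
    rw [← hact.2, ism_mim]
  -- f ≤ g
  have hB : f * (t * ε a * t⁻¹) = f := by
    refine (afr_iff hε hafr hgE (act t a)).mp ?_
    have hgt : (t * ε a * t⁻¹) * t = t * ε a := by
      calc (t * ε a * t⁻¹) * t = t * (ε a * (t⁻¹ * t)) := by simp only [mul_assoc]
        _ = t * ((t⁻¹ * t) * ε a) := by rw [idem_comm haE hdomE]
        _ = (t * t⁻¹ * t) * ε a := by simp only [mul_assoc]
        _ = t * ε a := by rw [ism_mim]
    rw [← hact.2, hgt, hact.2, (afr_iff hε hafr haE a).mpr haE]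
  -- b
  set b := act (t⁻¹ * t) a with hb
  have hεb : ε b = (t⁻¹ * t) * ε a := eps_act_idem hact hε hafr hdomE a
  have htb : act t b = act t a := by
    rw [hb, ← hact.2, ← mul_assoc, ism_mim]
  have hhE : (t⁻¹ * f * t) * (t⁻¹ * f * t) = t⁻¹ * f * t := by
    have := conj_idem t⁻¹ hfE
    rwa [ism_inv_inv] at this
  have hD : ε b * (t⁻¹ * f * t) = ε b := by
    refine (afr_iff hε hafr hhE b).mp ?_
    have hsp : act (t⁻¹ * f * t) b = act t⁻¹ (act f (act t b)) := by
      rw [hact.2 (t⁻¹ * f) t b, hact.2 t⁻¹ f (act t b)]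
    rw [hsp, htb,
      show act f (act t a) = act t a from (afr_iff hε hafr hfE (act t a)).mpr hfE,
      ← hact.2 t⁻¹ t a]
  -- conclude
  have hgf : (t * ε a * t⁻¹) * f = t * ε a * t⁻¹ := by
    have h : t * (ε b * (t⁻¹ * f * t)) * t⁻¹ = t * ε b * t⁻¹ := by rw [hD]
    rw [hεb] at h
    calc (t * ε a * t⁻¹) * f
        = (t * ε a * t⁻¹) * (f * (t * t⁻¹)) := by rw [hA]
      _ = (t * t⁻¹ * t) * (ε a * (t⁻¹ * (f * (t * t⁻¹)))) := by
          rw [ism_mim]; simp only [mul_assoc]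
      _ = t * ((t⁻¹ * t * ε a) * (t⁻¹ * f * t)) * t⁻¹ := by simp only [mul_assoc]
      _ = t * (t⁻¹ * t * ε a) * t⁻¹ := h
      _ = (t * t⁻¹ * t) * (ε a * t⁻¹) := by simp only [mul_assoc]
      _ = t * ε a * t⁻¹ := by rw [ism_mim]; simp only [mul_assoc]
  rw [← hB, idem_comm hfE hgE]
  exact hgf

lemma absorb (hact : IsAction act) (hε : IsSurjHomOntoE ε) (hafr : AFR act ε)
    {e : T} (he : e * e = e) (a x : K) (hx : ε x * e = ε x) :
    a * x = act e a * x := by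
  have h1 : act e x = x := (afr_iff hε hafr he x).mpr hx
  have h2 : act e (a * x) = a * x := by
    refine (afr_iff hε hafr he (a * x)).mpr ?_
    rw [hε.1, mul_assoc, hx]
  calc a * x = act e (a * x) := h2.symm
    _ = act e a * act e x := hact.1 e a x
    _ = act e a * x := by rw [h1]

end AuxAct
section MainAux

variable {K T : Type*} [InverseSemigroup K] [InverseSemigroup T]
variable {act : T → K → K} {ε : K → T}

lemma conj_idem' {S : Type*} [InverseSemigroup S] (s : S) {e : S} (he : e * e = e) :
    (s⁻¹ * e * s) * (s⁻¹ * e * s) = s⁻¹ * e * s := by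
  have h := conj_idem s⁻¹ he
  rwa [ism_inv_inv] at h

lemma closure_l (hact : IsAction act) (hε : IsSurjHomOntoE ε) (hafr : AFR act ε)
    (t u : T) (a : K) (hp' : ε a = u * u⁻¹) :
    ε (act t a) = (t * u) * (t * u)⁻¹ := by
  rw [eps_act hact hε hafr, hp', ism_mul_inv_rev]
  simp only [mul_assoc]

lemma closure_r (hact : IsAction act) (hε : IsSurjHomOntoE ε) (hafr : AFR act ε)
    (t u : T) (a : K) (hp' : ε a = u * u⁻¹) :
    ε (act ((u * t) * (u * t)⁻¹) a) = (u * t) * (u * t)⁻¹ := by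
  rw [eps_act_idem hact hε hafr (ran_idem (u * t)), hp', ism_mul_inv_rev]
  calc (u * t) * (t⁻¹ * u⁻¹) * (u * u⁻¹)
      = u * ((t * t⁻¹) * (u⁻¹ * u)) * u⁻¹ := by simp only [mul_assoc]
    _ = u * ((u⁻¹ * u) * (t * t⁻¹)) * u⁻¹ := by
        rw [idem_comm (ran_idem t) (dom_idem u)]
    _ = (u * u⁻¹ * u) * ((t * t⁻¹) * u⁻¹) := by simp only [mul_assoc]
    _ = u * ((t * t⁻¹) * u⁻¹) := by rw [ism_mim]
    _ = (u * t) * (t⁻¹ * u⁻¹) := by simp only [mul_assoc]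

lemma Eu_eq (u v t : T) :
    ((u * v * t) * (u * v * t)⁻¹) * u = u * ((v * t) * (v * t)⁻¹) := by
  rw [ism_mul_inv_rev (u * v) t, ism_mul_inv_rev u v, ism_mul_inv_rev v t]
  calc (u * v * t) * (t⁻¹ * (v⁻¹ * u⁻¹)) * u
      = u * ((v * (t * t⁻¹) * v⁻¹) * (u⁻¹ * u)) := by simp only [mul_assoc]
    _ = u * ((u⁻¹ * u) * (v * (t * t⁻¹) * v⁻¹)) := by
        rw [idem_comm (conj_idem v (ran_idem t)) (dom_idem u)]
    _ = (u * u⁻¹ * u) * (v * (t * t⁻¹) * v⁻¹) := by simp only [mul_assoc]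
    _ = u * (v * (t * t⁻¹) * v⁻¹) := by rw [ism_mim]
    _ = u * ((v * t) * (t⁻¹ * v⁻¹)) := by simp only [mul_assoc]

lemma epsX_eq (hact : IsAction act) (hε : IsSurjHomOntoE ε) (hafr : AFR act ε)
    (u v t : T) (b : K) (hq' : ε b = v * v⁻¹) :
    ε (act u (act ((v * t) * (v * t)⁻¹) b)) = (u * v * t) * (u * v * t)⁻¹ := by
  rw [eps_act hact hε hafr u, eps_act_idem hact hε hafr (ran_idem (v * t)) b, hq',
    ism_mul_inv_rev v t, ism_mul_inv_rev (u * v) t, ism_mul_inv_rev u v]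
  calc u * ((v * t) * (t⁻¹ * v⁻¹) * (v * v⁻¹)) * u⁻¹
      = u * (v * ((t * t⁻¹) * (v⁻¹ * v)) * v⁻¹) * u⁻¹ := by simp only [mul_assoc]
    _ = u * (v * ((v⁻¹ * v) * (t * t⁻¹)) * v⁻¹) * u⁻¹ := by
        rw [idem_comm (ran_idem t) (dom_idem v)]
    _ = u * ((v * v⁻¹ * v) * ((t * t⁻¹) * v⁻¹)) * u⁻¹ := by simp only [mul_assoc]
    _ = u * (v * ((t * t⁻¹) * v⁻¹)) * u⁻¹ := by rw [ism_mim]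
    _ = (u * v * t) * (t⁻¹ * (v⁻¹ * u⁻¹)) := by simp only [mul_assoc]

lemma epsY_le (hact : IsAction act) (hε : IsSurjHomOntoE ε) (hafr : AFR act ε)
    (u v t : T) (b : K) (hq' : ε b = v * v⁻¹) :
    ε (act (u * t) b) * ((u * t) * (u * t)⁻¹) = ε (act (u * t) b) := by
  rw [eps_act hact hε hafr, hq', ism_mul_inv_rev u t]
  calc (u * t) * (v * v⁻¹) * (t⁻¹ * u⁻¹) * ((u * t) * (t⁻¹ * u⁻¹))
      = ((u * t) * ((v * v⁻¹) * (t⁻¹ * (u⁻¹ * u) * t))) * (t⁻¹ * u⁻¹) := by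
        simp only [mul_assoc]
    _ = ((u * t) * ((t⁻¹ * (u⁻¹ * u) * t) * (v * v⁻¹))) * (t⁻¹ * u⁻¹) := by
        rw [idem_comm (ran_idem v) (conj_idem' t (dom_idem u))]
    _ = u * ((t * t⁻¹) * (u⁻¹ * u)) * (t * ((v * v⁻¹) * (t⁻¹ * u⁻¹))) := by
        simp only [mul_assoc]
    _ = u * ((u⁻¹ * u) * (t * t⁻¹)) * (t * ((v * v⁻¹) * (t⁻¹ * u⁻¹))) := by
        rw [idem_comm (ran_idem t) (dom_idem u)]
    _ = (u * u⁻¹ * u) * ((t * t⁻¹ * t) * ((v * v⁻¹) * (t⁻¹ * u⁻¹))) := by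
        simp only [mul_assoc]
    _ = u * (t * ((v * v⁻¹) * (t⁻¹ * u⁻¹))) := by rw [ism_mim, ism_mim]
    _ = (u * t) * (v * v⁻¹) * (t⁻¹ * u⁻¹) := by simp only [mul_assoc]

end MainAux
/-- Let `T` act on `K` by endomorphisms satisfying (AFR), let
`𝕊 = K ⋊ T` be the full restricted semidirect product and `Θ = ker π₂`.
For each `t ∈ T`, the bioperator `ω_[t]` defined by `ω_[t](x,u) = (t·x, tu)`
and `(x,u)ω_[t] = (ran(ut)·x, ut)` is a bitranslation of `𝕊`, respects `Θ`,
and its induced bitranslation on `𝕊/Θ ≅ T` is the inner bitranslation of `T`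
induced by `t`; in particular `ω_[t] ∈ Ω(𝕊, Θ)`. -/
theorem omega_t_is_bitranslation {K T : Type*} [InverseSemigroup K]
    [InverseSemigroup T] (act : T → K → K) (hact : IsAction act)
    (ε : K → T) (hε : IsSurjHomOntoE ε) (hafr : AFR act ε) :
    ∀ t : T,
      IsBitransOn (rsdMul act) (rsdSet ε) (Ltr act t) (Rtr act t) ∧
      RespectsPi2 (rsdSet ε) (Ltr act t) (Rtr act t) ∧
      InducesInnerPi2 (rsdSet ε) (Ltr act t) (Rtr act t) t ∧
      MemOmegaPi2 (rsdMul act) (rsdSet ε) (Ltr act t) (Rtr act t) := by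
  intro t
  have hbt : IsBitransOn (rsdMul act) (rsdSet ε) (Ltr act t) (Rtr act t) := by
    constructor
    · rintro ⟨a, u⟩ hp
      have hp' : ε a = u * u⁻¹ := hp
      constructor
      · show ε (act t a) = (t * u) * (t * u)⁻¹
        exact closure_l hact hε hafr t u a hp'
      · show ε (act ((u * t) * (u * t)⁻¹) a) = (u * t) * (u * t)⁻¹
        exact closure_r hact hε hafr t u a hp'
    · rintro ⟨a, u⟩ hp ⟨b, v⟩ hq
      have hp' : ε a = u * u⁻¹ := hp
      have hq' : ε b = v * v⁻¹ := hq
      refine ⟨?_, ?_, ?_⟩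
      · -- left translation is linked to the multiplication
        show (act t (a * act u b), t * (u * v))
            = (act t a * act (t * u) b, (t * u) * v)
        have h1 : act t (a * act u b) = act t a * act (t * u) b := by
          rw [hact.1, ← hact.2]
        rw [h1, mul_assoc t u v]
      · -- right translation
        show (act ((u * v * t) * (u * v * t)⁻¹) (a * act u b), u * v * t)
            = (a * act u (act ((v * t) * (v * t)⁻¹) b), u * (v * t))
        have hL : act ((u * v * t) * (u * v * t)⁻¹) (a * act u b)
            = act ((u * v * t) * (u * v * t)⁻¹) a
              * act u (act ((v * t) * (v * t)⁻¹) b) := by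
          rw [hact.1, ← hact.2 ((u * v * t) * (u * v * t)⁻¹) u b, Eu_eq u v t,
            hact.2 u ((v * t) * (v * t)⁻¹) b]
        have habs : a * act u (act ((v * t) * (v * t)⁻¹) b)
            = act ((u * v * t) * (u * v * t)⁻¹) a
              * act u (act ((v * t) * (v * t)⁻¹) b) := by
          refine absorb hact hε hafr (ran_idem (u * v * t)) a _ ?_
          rw [epsX_eq hact hε hafr u v t b hq']
          exact ran_idem (u * v * t)
        rw [hL, ← habs, mul_assoc u v t]
      · -- linking identity
        show (a * act u (act t b), u * (t * v))
            = (act ((u * t) * (u * t)⁻¹) a * act (u * t) b, (u * t) * v)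
        have h1 : a * act u (act t b) = a * act (u * t) b := by rw [← hact.2]
        have h2 : a * act (u * t) b
            = act ((u * t) * (u * t)⁻¹) a * act (u * t) b :=
          absorb hact hε hafr (ran_idem (u * t)) a _
            (epsY_le hact hε hafr u v t b hq')
        rw [h1, h2, mul_assoc u t v]
  have hresp : RespectsPi2 (rsdSet ε) (Ltr act t) (Rtr act t) := by
    rintro ⟨a, u⟩ _ ⟨b, v⟩ _ h
    have h' : u = v := h
    exact ⟨by show t * u = t * v; rw [h'], by show u * t = v * t; rw [h']⟩
  have hind : InducesInnerPi2 (rsdSet ε) (Ltr act t) (Rtr act t) t := by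
    intro p _
    exact ⟨rfl, rfl⟩
  exact ⟨hbt, hresp, hind, hbt, hresp, t, hind⟩
end
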